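/- arXiv:2012.06713 — 3 statements merged into one kernel-verified Lean document; each statement's English description precedes it below -/
import Mathlib

section
/- Let U and V be strings over an arbitrary alphabet and let b ≥ 1 be an integer. For every partition of V into b contiguous, possibly empty substrings V = V_1 V_2 ⋯ V_b, there exists a partition of U into b contiguous, possibly empty substrings U = U_1 U_2 ⋯ U_b such that d_E(U, V) ≥ Σ_{i=1}^b 1[U_i ≠ V_i], where 1[U_i ≠ V_i] equals 1 if U_i and V_i are unequal as strings and 0 otherwise. -/
noncomputable section

/-- Costs for the Levenshtein distance (formerly in Mathlib, `Mathlib/Data/List/EditDistance/Defs.lean`). -/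
structure Levenshtein.Cost (α β δ : Type*) where
  delete : α → δ
  insert : β → δ
  substitute : α → β → δ

/-- The default unit costs (formerly in Mathlib). -/
def Levenshtein.defaultCost {α : Type*} [DecidableEq α] : Levenshtein.Cost α α ℕ where
  delete _ := 1
  insert _ := 1
  substitute a b := if a = b then 0 else 1

/-- Levenshtein distance, by the recursion that characterized the former Mathlib definition. -/
def levenshtein {α β δ : Type*} [AddZeroClass δ] [Min δ] (C : Levenshtein.Cost α β δ) :
    List α → List β → δ
  | [], [] => 0
  | [], y :: ys => C.insert y + levenshtein C [] ys
  | x :: xs, [] => C.delete x + levenshtein C xs []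
  | x :: xs, y :: ys => min (C.delete x + levenshtein C xs (y :: ys))
      (min (C.insert y + levenshtein C (x :: xs) ys) (C.substitute x y + levenshtein C xs ys))

/-- Levenshtein edit distance with unit costs. -/
def editDist {α : Type*} [DecidableEq α] (x y : List α) : ℕ :=
  levenshtein Levenshtein.defaultCost x y

/-!
Cutting `V = V₁ ⋯ V_b` after `V₁`, an optimal edit script for `U` and `V` cuts `U` into a part
edited into `V₁` and a part edited into the rest, so
`d_E(U, V) ≥ d_E(U₁, V₁) + d_E(U', V₂ ⋯ V_b)` for some `U = U₁ U'`. Iterating over the blocks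
gives `U = U₁ ⋯ U_b` with `d_E(U, V) ≥ ∑ d_E(U_i, V_i)`, and each block with `U_i ≠ V_i`
contributes at least one.
-/

section

variable {α : Type*} [DecidableEq α]

theorem editDist_nil_left (ys : List α) : editDist [] ys = ys.length := by
  induction ys with
  | nil => simp [editDist, levenshtein]
  | cons y ys ih =>
    simp only [editDist, levenshtein, Levenshtein.defaultCost] at ih ⊢
    rw [ih, List.length_cons, Nat.add_comm]

theorem editDist_cons_cons (x y : α) (xs ys : List α) :
    editDist (x :: xs) (y :: ys) = min (1 + editDist xs (y :: ys))
      (min (1 + editDist (x :: xs) ys) ((if x = y then 0 else 1) + editDist xs ys)) := by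
  simp [editDist, levenshtein, Levenshtein.defaultCost]

theorem editDist_cons_left_le (x : α) (xs ys : List α) :
    editDist (x :: xs) ys ≤ 1 + editDist xs ys := by
  cases ys with
  | nil => simp [editDist, levenshtein, Levenshtein.defaultCost]
  | cons y ys => exact (editDist_cons_cons x y xs ys).trans_le (min_le_left _ _)

theorem editDist_cons_right_le (y : α) (xs ys : List α) :
    editDist xs (y :: ys) ≤ 1 + editDist xs ys := by
  cases xs with
  | nil => simp [editDist, levenshtein, Levenshtein.defaultCost]
  | cons x xs =>
    exact (editDist_cons_cons x y xs ys).trans_le ((min_le_right _ _).trans (min_le_left _ _))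

theorem editDist_cons_cons_le (x y : α) (xs ys : List α) :
    editDist (x :: xs) (y :: ys) ≤ (if x = y then 0 else 1) + editDist xs ys :=
  (editDist_cons_cons x y xs ys).trans_le ((min_le_right _ _).trans (min_le_right _ _))

theorem eq_of_editDist_eq_zero {xs ys : List α} (h : editDist xs ys = 0) : xs = ys := by
  induction xs generalizing ys with
  | nil => simpa [editDist_nil_left, eq_comm] using h
  | cons x xs ih =>
    cases ys with
    | nil => simp [editDist, levenshtein, Levenshtein.defaultCost] at h
    | cons y ys =>
      rw [editDist_cons_cons] at h
      by_cases hxy : x = y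
      · simp only [hxy, if_true] at h
        rw [hxy, ih (ys := ys) (by omega)]
      · simp only [hxy, if_false] at h
        omega

theorem ite_ne_le_editDist (xs ys : List α) : (if xs ≠ ys then 1 else 0) ≤ editDist xs ys := by
  split_ifs with h
  · exact Nat.one_le_iff_ne_zero.mpr (mt eq_of_editDist_eq_zero h)
  · exact Nat.zero_le _

theorem exists_append_eq_editDist_add_le (ys₁ ys₂ xs : List α) :
    ∃ xs₁ xs₂, xs = xs₁ ++ xs₂ ∧
      editDist xs₁ ys₁ + editDist xs₂ ys₂ ≤ editDist xs (ys₁ ++ ys₂) := by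
  induction ys₁ generalizing xs with
  | nil => exact ⟨[], xs, rfl, by simp [editDist_nil_left]⟩
  | cons y ys₁ ih =>
    rw [List.cons_append]
    induction xs with
    | nil => exact ⟨[], [], rfl, by simp [editDist_nil_left]; omega⟩
    | cons x xs ihx =>
      rw [editDist_cons_cons]
      let P d := ∃ xs₁ xs₂, x :: xs = xs₁ ++ xs₂ ∧
        editDist xs₁ (y :: ys₁) + editDist xs₂ ys₂ ≤ d
      refine min_rec' P ?delete (min_rec' P ?insert ?substitute)
      case delete =>
        obtain ⟨xs₁, xs₂, rfl, hle⟩ := ihx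
        have := editDist_cons_left_le x xs₁ (y :: ys₁)
        exact ⟨x :: xs₁, xs₂, rfl, by omega⟩
      case insert =>
        obtain ⟨xs₁, xs₂, hxs, hle⟩ := ih (x :: xs)
        have := editDist_cons_right_le y xs₁ ys₁
        exact ⟨xs₁, xs₂, hxs, by omega⟩
      case substitute =>
        obtain ⟨xs₁, xs₂, rfl, hle⟩ := ih xs
        have := editDist_cons_cons_le x y xs₁ ys₁
        exact ⟨x :: xs₁, xs₂, rfl, by omega⟩

theorem exists_blocks_countP_ne_le_editDist (V₁ : List α) (Vs : List (List α)) (U : List α) :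
    ∃ Us : List (List α), Us.length = Vs.length + 1 ∧ U = Us.flatten ∧
      (Us.zip (V₁ :: Vs)).countP (fun p => decide (p.1 ≠ p.2)) ≤
        editDist U (V₁ :: Vs).flatten := by
  induction Vs generalizing V₁ U with
  | nil => exact ⟨[U], rfl, by simp, by simpa using ite_ne_le_editDist U V₁⟩
  | cons V₂ Vs ih =>
    obtain ⟨U₁, U', rfl, hsplit⟩ := exists_append_eq_editDist_add_le V₁ (V₂ :: Vs).flatten U
    obtain ⟨Us, hlen, rfl, hcount⟩ := ih V₂ U'
    refine ⟨U₁ :: Us, by simp [hlen], rfl, ?_⟩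
    have := ite_ne_le_editDist U₁ V₁
    rw [List.zip_cons_cons, List.countP_cons, List.flatten_cons]
    simp only [decide_eq_true_eq]
    omega

end

/-- For every partition of `V` into `b` contiguous (possibly empty) substrings, there is a
partition of `U` into `b` contiguous (possibly empty) substrings such that the edit distance
`d_E(U,V)` is at least the number of indices at which the two partitions disagree. -/
theorem editDist_ge_count_ne_blocks {α : Type*} [DecidableEq α]
    (U V : List α) (b : ℕ) (hb : 1 ≤ b)
    (Vs : List (List α)) (hVb : Vs.length = b) (hV : V = Vs.flatten) :
    ∃ Us : List (List α), Us.length = b ∧ U = Us.flatten ∧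
      (Us.zip Vs).countP (fun p => decide (p.1 ≠ p.2)) ≤ editDist U V := by
  subst hV hVb
  obtain ⟨V₁, Vs, rfl⟩ := List.exists_cons_of_length_pos hb
  exact exists_blocks_countP_ne_le_editDist V₁ Vs U
end
end

section
/- Let r be a 0-run of Y that has a 1-run of Y immediately adjacent on each side, and let r_X^0 denote the number of positions of r at which X equals 0. Let Z be the number of kept positions of r at which X equals 0 and let W be the number of kept positions of the two 1-runs of Y adjacent to r at which X equals 0. Then: (i) deterministically, whenever ℓ is an index of X̃ with X̃[ℓ] = 0 originating in r such that i_ℓ and j_ℓ exist and originate in the two 1-runs of Y adjacent to r, one has S(X̃, ℓ) ≤ Z + W; and (ii) Z has the Binomial(r_X^0, p) distribution and for every t, P(Z + W ≥ t) ≤ P(B_1 + B_2 ≥ t), where B_1 ~ Binomial(r_X^0, p) and B_2 ~ Binomial(2m, p) are independent. -/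
open scoped ENNReal

noncomputable section

/-- Bernoulli distribution with real parameter (clamped to `[0,1]`). -/
def bern (p : ℝ) : PMF Bool :=
  PMF.bernoulli (min (Real.toNNReal p) 1) (min_le_right _ _)

/-- The distribution of a keep-mask of length `n`: i.i.d. Bernoulli(`p`) entries. -/
def maskPMF (p : ℝ) : ℕ → PMF (List Bool)
  | 0 => PMF.pure []
  | n + 1 => (bern p).bind fun b => (maskPMF p n).map fun M => b :: M

/-- Logarithm to base `1/q`. -/
def logq (q x : ℝ) : ℝ := Real.log x / Real.log (1 / q)

/-- `IsRun X a b v` : positions `a, …, b-1` of `X` form a maximal block (a run)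
of bits equal to `v`. -/
def IsRun (X : List Bool) (a b : ℕ) (v : Bool) : Prop :=
  a < b ∧ b ≤ X.length ∧ (∀ i, a ≤ i → i < b → X.getD i false = v) ∧
    (a = 0 ∨ X.getD (a - 1) false ≠ v) ∧ (b = X.length ∨ X.getD b false ≠ v)

/-- The positions kept by a mask `M`, in increasing order. -/
def keptIdx (M : List Bool) : List ℕ :=
  (List.range M.length).filter fun i => M.getD i false

/-- The trace of `X` determined by the keep-mask `M`: the subsequence of `X`
at the kept positions. -/
def maskTrace (X M : List Bool) : List Bool :=
  (keptIdx M).map fun i => X.getD i false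

/-- The originating position (in the source string) of index `ℓ` of the trace
determined by mask `M`. -/
def originPos (M : List Bool) (ℓ : ℕ) : ℕ := (keptIdx M).getD ℓ M.length

/-- Indices (in increasing order) of the `1`s of `t` strictly to the left of `ℓ`. -/
def onesLeft (t : List Bool) (ℓ : ℕ) : List ℕ :=
  (List.range ℓ).filter fun k => t.getD k false

/-- Indices (in increasing order) of the `1`s of `t` strictly to the right of `ℓ`. -/
def onesRight (t : List Bool) (ℓ : ℕ) : List ℕ :=
  (List.range t.length).filter fun k => decide (ℓ < k) && t.getD k false

/-- `i_ℓ` exists: there are at least `m+1` ones strictly to the left of `ℓ` in `t`. -/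
def iExists (t : List Bool) (ℓ m : ℕ) : Prop := m + 1 ≤ (onesLeft t ℓ).length

/-- `j_ℓ` exists: there are at least `m+1` ones strictly to the right of `ℓ` in `t`. -/
def jExists (t : List Bool) (ℓ m : ℕ) : Prop := m + 1 ≤ (onesRight t ℓ).length

/-- `i_ℓ`: the index of `t` carrying the `(m+1)`-st one strictly to the left of `ℓ`. -/
def iIdx (t : List Bool) (ℓ m : ℕ) : ℕ :=
  (onesLeft t ℓ).getD ((onesLeft t ℓ).length - (m + 1)) 0

/-- `j_ℓ`: the index of `t` carrying the `(m+1)`-st one strictly to the right of `ℓ`. -/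
def jIdx (t : List Bool) (ℓ m : ℕ) : ℕ := (onesRight t ℓ).getD m 0

/-- `S(t, ℓ)`: the number of indices `k` with `i_ℓ ≤ k ≤ j_ℓ` and `t[k] = 0`. -/
def Sval (t : List Bool) (ℓ m : ℕ) : ℕ :=
  ((List.range t.length).filter fun k =>
    decide (iIdx t ℓ m ≤ k) && decide (k ≤ jIdx t ℓ m) && !(t.getD k true)).length

/-- `X` is obtained from `Y` (of the same length) by modifying at most `m` bits
within each run of `Y`. -/
def ModifiedRuns (Y X : List Bool) (m : ℕ) : Prop :=
  X.length = Y.length ∧ ∀ a b v, IsRun Y a b v →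
    ((Finset.Ico a b).filter fun i => X.getD i false ≠ Y.getD i false).card ≤ m

/-- The binomial distribution `Bin(k, p)`, as the number of successes among `k`
independent Bernoulli(`p`) trials. -/
def binPMF (p : ℝ) (k : ℕ) : PMF ℕ := (maskPMF p k).map fun M => M.count true

/-!
Counting the kept positions of an i.i.d. Bernoulli(`p`) mask inside a fixed set of `k`
positions gives a `Bin(k, p)` variable. Trace indices are sent strictly increasingly to kept
positions by `originPos`, so the `0`s of the trace between `i_ℓ` and `j_ℓ` inject into the kept
`0`s of `X` in `r` and its two neighbouring `1`-runs: this is (i). Those are counted by `Z + W`,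
a `Bin(r_X^0 + w, p)` variable with `w ≤ 2m`, since `X` differs from `Y` in at most `m`
positions of each `1`-run. Binomial tails grow with the number of trials, and
`Bin(r_X^0, p) + Bin(2m, p) = Bin(r_X^0 + 2m, p)`, which gives (ii).
-/

def keptCount (M : List Bool) (S : Finset ℕ) : ℕ :=
  (S.filter fun i => M.getD i false = true).card

section KeptCount

variable (M : List Bool)

theorem keptCount_mono {S T : Finset ℕ} (h : S ⊆ T) : keptCount M S ≤ keptCount M T :=
  Finset.card_le_card (Finset.filter_subset_filter _ h)

theorem keptCount_union_le (S T : Finset ℕ) :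
    keptCount M (S ∪ T) ≤ keptCount M S + keptCount M T := by
  rw [keptCount, Finset.filter_union]
  exact Finset.card_union_le _ _

theorem keptCount_union_of_disjoint {S T : Finset ℕ} (h : Disjoint S T) :
    keptCount M (S ∪ T) = keptCount M S + keptCount M T := by
  rw [keptCount, Finset.filter_union]
  exact Finset.card_union_of_disjoint (Finset.disjoint_filter_filter h)

theorem card_filter_kept_and (S : Finset ℕ) (P : ℕ → Prop) [DecidablePred P] :
    (S.filter fun i => M.getD i false = true ∧ P i).card = keptCount M (S.filter P) := by
  rw [keptCount, Finset.filter_filter]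
  simp only [and_comm]

end KeptCount

theorem Finset.card_filter_range_succ' (P : ℕ → Prop) [DecidablePred P] (n : ℕ) :
    ((Finset.range (n + 1)).filter P).card =
      ((Finset.range n).filter fun i => P (i + 1)).card + if P 0 then 1 else 0 := by
  simp only [Finset.card_filter, Finset.sum_range_succ']

section Binomial

variable (p : ℝ)

theorem maskPMF_succ (n : ℕ) :
    maskPMF p (n + 1) = (bern p).bind fun b => (maskPMF p n).map (b :: ·) := rfl

theorem binPMF_zero : binPMF p 0 = PMF.pure 0 := by
  simp [binPMF, maskPMF, PMF.pure_map]

theorem binPMF_succ (k : ℕ) :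
    binPMF p (k + 1) = (bern p).bind fun b =>
      (binPMF p k).map (· + if b then 1 else 0) := by
  simp only [binPMF, maskPMF_succ, PMF.map_bind, PMF.map_comp, Function.comp_def]
  congr! with b M
  cases b <;> simp

theorem maskPMF_add (j d : ℕ) :
    maskPMF p (j + d) = (maskPMF p j).bind fun M₁ => (maskPMF p d).map (M₁ ++ ·) := by
  induction j with
  | zero =>
    rw [Nat.zero_add, maskPMF, PMF.pure_bind]
    exact (PMF.map_id _).symm
  | succ j ih =>
    rw [Nat.succ_add, maskPMF_succ, maskPMF_succ, ih, PMF.bind_bind]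
    simp only [PMF.map_bind, PMF.bind_map, PMF.map_comp]
    rfl

theorem binPMF_add (j d : ℕ) :
    binPMF p (j + d) = (binPMF p j).bind fun c => (binPMF p d).map (c + ·) := by
  simp only [binPMF, maskPMF_add, PMF.map_bind, PMF.bind_map, PMF.map_comp, Function.comp_def,
    List.count_append]

theorem binPMF_toOuterMeasure_mono {U : Set ℕ} (hU : IsUpperSet U) {j k : ℕ} (hjk : j ≤ k) :
    (binPMF p j).toOuterMeasure U ≤ (binPMF p k).toOuterMeasure U := by
  obtain ⟨d, rfl⟩ := Nat.exists_eq_add_of_le hjk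
  rw [binPMF_add, PMF.toOuterMeasure_bind_apply, PMF.toOuterMeasure_apply]
  refine ENNReal.tsum_le_tsum fun c => ?_
  by_cases hc : c ∈ U
  · have hshift : ((binPMF p d).map (c + ·)).toOuterMeasure U = 1 := by
      rw [PMF.toOuterMeasure_apply_eq_one_iff]
      intro x hx
      obtain ⟨e, -, rfl⟩ := (PMF.mem_support_map_iff _ _ _).1 hx
      exact hU (Nat.le_add_right c e) hc
    rw [Set.indicator_of_mem hc, hshift, mul_one]
  · simp [Set.indicator_of_notMem hc]

theorem maskPMF_map_card_filter_range (s : ℕ → Prop) [DecidablePred s] (n : ℕ) :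
    (maskPMF p n).map
        (fun M => ((Finset.range n).filter fun i => s i ∧ M.getD i false = true).card) =
      binPMF p ((Finset.range n).filter s).card := by
  induction n generalizing s with
  | zero => simp [maskPMF, PMF.pure_map, binPMF_zero]
  | succ n ih =>
    simp only [Finset.card_filter_range_succ', maskPMF_succ, PMF.map_bind, PMF.map_comp,
      Function.comp_def, List.getD_cons_succ, List.getD_cons_zero]
    by_cases hs : s 0
    · simp only [hs, if_true, true_and, binPMF_succ, ← ih (fun i => s (i + 1))]
      congr! with b
      cases b <;> simp [PMF.map_comp, Function.comp_def]
    · simp only [hs, if_false, false_and, add_zero, ← ih (fun i => s (i + 1))]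
      rw [PMF.bind_const]

theorem maskPMF_map_keptCount {n : ℕ} {S : Finset ℕ} (hS : ∀ i ∈ S, i < n) :
    (maskPMF p n).map (keptCount · S) = binPMF p S.card := by
  have hrange : ∀ P : ℕ → Prop, [DecidablePred P] →
      S.filter P = (Finset.range n).filter fun i => i ∈ S ∧ P i := fun P _ => by
    ext i
    simp only [Finset.mem_filter, Finset.mem_range]
    exact ⟨fun h => ⟨hS i h.1, h⟩, fun h => h.2⟩
  have hS' : S = (Finset.range n).filter (· ∈ S) := by simpa using hrange (fun _ => True)
  simp only [keptCount, hrange]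
  rw [maskPMF_map_card_filter_range, ← hS']

theorem maskPMF_toOuterMeasure_keptCount_add_le {n k : ℕ} {A B : Finset ℕ}
    (hAB : Disjoint A B) (hn : ∀ i ∈ A ∪ B, i < n) (hB : B.card ≤ k) (t : ℕ) :
    (maskPMF p n).toOuterMeasure {M | t ≤ keptCount M A + keptCount M B} ≤
      ((binPMF p A.card).bind fun c => (binPMF p k).map (c + ·)).toOuterMeasure (Set.Ici t) :=
  calc (maskPMF p n).toOuterMeasure {M | t ≤ keptCount M A + keptCount M B}
      = ((maskPMF p n).map (keptCount · (A ∪ B))).toOuterMeasure (Set.Ici t) := by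
        rw [PMF.toOuterMeasure_map_apply]
        simp only [keptCount_union_of_disjoint _ hAB]
        rfl
    _ = (binPMF p (A ∪ B).card).toOuterMeasure (Set.Ici t) := by
        rw [maskPMF_map_keptCount _ hn]
    _ ≤ (binPMF p (A.card + k)).toOuterMeasure (Set.Ici t) := by
        refine binPMF_toOuterMeasure_mono _ (isUpperSet_Ici t) ?_
        rw [Finset.card_union_of_disjoint hAB]
        exact Nat.add_le_add_left hB _
    _ = _ := by rw [binPMF_add]

end Binomial

section Trace

variable (X M : List Bool)

theorem length_maskTrace : (maskTrace X M).length = (keptIdx M).length := List.length_map _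

theorem originPos_eq_getElem {k : ℕ} (hk : k < (keptIdx M).length) :
    originPos M k = (keptIdx M)[k] := List.getD_eq_getElem _ _ hk

theorem originPos_strictMonoOn : StrictMonoOn (originPos M) (Set.Iio (keptIdx M).length) := by
  intro k₁ hk₁ k₂ hk₂ hlt
  rw [originPos_eq_getElem M hk₁, originPos_eq_getElem M hk₂]
  exact List.pairwise_iff_getElem.1 (List.pairwise_lt_range.filter _) k₁ k₂ hk₁ hk₂ hlt

theorem getD_originPos {k : ℕ} (hk : k < (keptIdx M).length) :
    M.getD (originPos M k) false = true := by
  rw [originPos_eq_getElem M hk]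
  simpa using (List.mem_filter.1 (List.getElem_mem hk)).2

theorem maskTrace_getD {k : ℕ} (hk : k < (keptIdx M).length) (d : Bool) :
    (maskTrace X M).getD k d = X.getD (originPos M k) false := by
  rw [maskTrace, List.getD_eq_getElem _ _ (by simpa using hk), List.getElem_map,
    originPos_eq_getElem M hk]

theorem length_filter_zeros_le_keptCount {i j : ℕ} (hj : j < (maskTrace X M).length) :
    ((List.range (maskTrace X M).length).filter fun k =>
        decide (i ≤ k) && decide (k ≤ j) && !((maskTrace X M).getD k true)).length ≤
      keptCount M ((Finset.Icc (originPos M i) (originPos M j)).filter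
        fun x => X.getD x false = false) := by
  rw [← List.toFinset_card_of_nodup (List.nodup_range.filter _)]
  rw [length_maskTrace] at hj ⊢
  have hmono := originPos_strictMonoOn M
  refine Finset.card_le_card_of_injOn (originPos M) ?_ (hmono.injOn.mono ?_)
  · intro k hk
    simp only [Finset.mem_coe, List.mem_toFinset, List.mem_filter, List.mem_range,
      Bool.and_eq_true, decide_eq_true_eq, Bool.not_eq_true'] at hk
    obtain ⟨hk, ⟨hik, hkj⟩, hzero⟩ := hk
    have hi : i < (keptIdx M).length := hik.trans_lt hk
    simp only [Finset.mem_coe, Finset.mem_filter, Finset.mem_Icc]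
    refine ⟨⟨⟨(hmono.le_iff_le hi hk).2 hik, (hmono.le_iff_le hk hj).2 hkj⟩, ?_⟩,
      getD_originPos M hk⟩
    rwa [← maskTrace_getD X M hk true]
  · intro k hk
    exact List.mem_range.1 (List.mem_filter.1 (List.mem_toFinset.1 hk)).1

theorem jIdx_lt_length {t : List Bool} {ℓ m : ℕ} (h : jExists t ℓ m) :
    jIdx t ℓ m < t.length := by
  have hmem : jIdx t ℓ m ∈ onesRight t ℓ := by
    rw [jIdx, List.getD_eq_getElem _ _ h]
    exact List.getElem_mem _
  exact List.mem_range.1 (List.mem_filter.1 hmem).1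

theorem Sval_le_keptCount {ℓ m lo hi : ℕ} (hj : jExists (maskTrace X M) ℓ m)
    (hlo : lo ≤ originPos M (iIdx (maskTrace X M) ℓ m))
    (hhi : originPos M (jIdx (maskTrace X M) ℓ m) < hi) :
    Sval (maskTrace X M) ℓ m ≤
      keptCount M ((Finset.Ico lo hi).filter fun x => X.getD x false = false) := by
  refine (length_filter_zeros_le_keptCount X M (jIdx_lt_length hj)).trans
    (Finset.card_le_card (Finset.filter_subset_filter _ (Finset.filter_subset_filter _ ?_)))
  intro x hx
  rw [Finset.mem_Icc] at hx
  rw [Finset.mem_Ico]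
  omega

end Trace

theorem ModifiedRuns.card_filter_ne_le {Y X : List Bool} {m : ℕ} (h : ModifiedRuns Y X m)
    {a b : ℕ} {v : Bool} (hr : IsRun Y a b v) :
    ((Finset.Ico a b).filter fun i => X.getD i false ≠ v).card ≤ m := by
  refine le_of_eq_of_le (congrArg _ (Finset.filter_congr fun i hi => ?_)) (h.2 a b v hr)
  rw [Finset.mem_Ico] at hi
  rw [hr.2.2.1 i hi.1 hi.2]

theorem ModifiedRuns.card_zeros_adjacent_runs_le {Y X : List Bool} {m : ℕ}
    (h : ModifiedRuns Y X m) {a₁ a b b₁ : ℕ} (hl : IsRun Y a₁ a true)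
    (hr : IsRun Y b b₁ true) :
    ((Finset.Ico a₁ a ∪ Finset.Ico b b₁).filter fun i => X.getD i false = false).card ≤
      2 * m := by
  have hl := h.card_filter_ne_le hl
  have hr := h.card_filter_ne_le hr
  simp only [ne_eq, Bool.not_eq_true] at hl hr
  rw [Finset.filter_union, two_mul]
  exact (Finset.card_union_le _ _).trans (add_le_add hl hr)

theorem S_dominated_by_binomials_general
    (q : ℝ)
    (n : ℕ) (m : ℕ)
    (Y X : List Bool) (hYlen : Y.length = n)
    (hmod : ModifiedRuns Y X m)
    (a₁ a b b₁ : ℕ)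
    (hrl : IsRun Y a₁ a true) (hrr : IsRun Y b b₁ true)
    (Z W : List Bool → ℕ) (rX0 : ℕ)
    (hZ : Z = fun M => ((Finset.Ico a b).filter fun i =>
      M.getD i false = true ∧ X.getD i false = false).card)
    (hW : W = fun M => ((Finset.Ico a₁ a ∪ Finset.Ico b b₁).filter fun i =>
      M.getD i false = true ∧ X.getD i false = false).card)
    (hrX0 : rX0 = ((Finset.Ico a b).filter fun i => X.getD i false = false).card) :
    (∀ M : List Bool, M.length = n → ∀ ℓ, ℓ < (maskTrace X M).length →
      (maskTrace X M).getD ℓ true = false →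
      a ≤ originPos M ℓ → originPos M ℓ < b →
      iExists (maskTrace X M) ℓ m → jExists (maskTrace X M) ℓ m →
      a₁ ≤ originPos M (iIdx (maskTrace X M) ℓ m) →
      originPos M (iIdx (maskTrace X M) ℓ m) < a →
      b ≤ originPos M (jIdx (maskTrace X M) ℓ m) →
      originPos M (jIdx (maskTrace X M) ℓ m) < b₁ →
      Sval (maskTrace X M) ℓ m ≤ Z M + W M) ∧
    (maskPMF (1 - q) n).map Z = binPMF (1 - q) rX0 ∧
    (∀ t : ℕ, (maskPMF (1 - q) n).toOuterMeasure {M | t ≤ Z M + W M} ≤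
      ((binPMF (1 - q) rX0).bind fun b1 =>
        (binPMF (1 - q) (2 * m)).map fun b2 => b1 + b2).toOuterMeasure
        {s | t ≤ s}) := by
  set A := (Finset.Ico a b).filter fun i => X.getD i false = false
  set B := (Finset.Ico a₁ a ∪ Finset.Ico b b₁).filter fun i => X.getD i false = false
  have hZA : Z = (keptCount · A) := by simp only [hZ, card_filter_kept_and]; rfl
  have hWB : W = (keptCount · B) := by simp only [hW, card_filter_kept_and]; rfl
  have hdisj : Disjoint A B := Finset.disjoint_filter_filter <| Finset.disjoint_left.2 fun i => by
    simp only [Finset.mem_union, Finset.mem_Ico]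
    omega
  have hlt : ∀ i ∈ A ∪ B, i < n := fun i hi => by
    have := hrl.2.1
    have := hrr.2.1
    have := hrr.1
    simp only [A, B, Finset.mem_union, Finset.mem_filter, Finset.mem_Ico] at hi
    omega
  refine ⟨fun M _ ℓ _ _ _ _ _ hj hi _ _ hj' => ?_, ?_, fun t => ?_⟩
  · calc Sval (maskTrace X M) ℓ m ≤ _ := Sval_le_keptCount X M hj hi hj'
      _ ≤ keptCount M (A ∪ B) := by
          rw [← Finset.filter_union]
          refine keptCount_mono M (Finset.filter_subset_filter _ fun x hx => ?_)
          simp only [Finset.mem_union, Finset.mem_Ico] at hx ⊢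
          omega
      _ ≤ Z M + W M := hZA ▸ hWB ▸ keptCount_union_le M A B
  · rw [hZA, hrX0]
    exact maskPMF_map_keptCount _ fun i hi => hlt i (Finset.mem_union_left _ hi)
  · rw [hZA, hWB, hrX0]
    exact maskPMF_toOuterMeasure_keptCount_add_le _ hdisj hlt
      (hmod.card_zeros_adjacent_runs_le hrl hrr) t

/-- Property 2: (i) deterministically, `S(X̃,ℓ) ≤ Z + W` whenever `ℓ` carries a `0`
originating in the `0`-run `r = [a,b)` of `Y` and `i_ℓ, j_ℓ` exist and originate in the
two adjacent `1`-runs of `Y`; (ii) `Z ~ Bin(r_X^0, p)`, and `Z + W` is stochastically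
dominated by the sum of independent `Bin(r_X^0, p)` and `Bin(2m, p)` variables. -/
theorem S_dominated_by_binomials
    (q ε C' : ℝ) (hq0 : 0 < q) (hq1 : q < 1) (hε0 : 0 < ε) (hε1 : ε < 1)
    (hpε : 3 * ε < 1 - q) (hC : 1000 / (1 - q) ≤ C')
    (n : ℕ) (hn : 2 ≤ n) (m : ℕ) (hm : m = ⌈ε * C' * logq q n⌉₊)
    (Y X : List Bool) (hYlen : Y.length = n)
    (hY1 : ∀ a b, IsRun Y a b true → C' * logq q n / ε ≤ (b : ℝ) - a)
    (hY0 : ∀ a b, IsRun Y a b false →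
      (b : ℝ) - a < C' * logq q n ∨ 3 * C' * logq q n < (b : ℝ) - a)
    (hmod : ModifiedRuns Y X m)
    (a₁ a b b₁ : ℕ) (hr : IsRun Y a b false)
    (hrl : IsRun Y a₁ a true) (hrr : IsRun Y b b₁ true)
    (Z W : List Bool → ℕ) (rX0 : ℕ)
    (hZ : Z = fun M => ((Finset.Ico a b).filter fun i =>
      M.getD i false = true ∧ X.getD i false = false).card)
    (hW : W = fun M => ((Finset.Ico a₁ a ∪ Finset.Ico b b₁).filter fun i =>
      M.getD i false = true ∧ X.getD i false = false).card)
    (hrX0 : rX0 = ((Finset.Ico a b).filter fun i => X.getD i false = false).card) :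
    (∀ M : List Bool, M.length = n → ∀ ℓ, ℓ < (maskTrace X M).length →
      (maskTrace X M).getD ℓ true = false →
      a ≤ originPos M ℓ → originPos M ℓ < b →
      iExists (maskTrace X M) ℓ m → jExists (maskTrace X M) ℓ m →
      a₁ ≤ originPos M (iIdx (maskTrace X M) ℓ m) →
      originPos M (iIdx (maskTrace X M) ℓ m) < a →
      b ≤ originPos M (jIdx (maskTrace X M) ℓ m) →
      originPos M (jIdx (maskTrace X M) ℓ m) < b₁ →
      Sval (maskTrace X M) ℓ m ≤ Z M + W M) ∧
    (maskPMF (1 - q) n).map Z = binPMF (1 - q) rX0 ∧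
    (∀ t : ℕ, (maskPMF (1 - q) n).toOuterMeasure {M | t ≤ Z M + W M} ≤
      ((binPMF (1 - q) rX0).bind fun b1 =>
        (binPMF (1 - q) (2 * m)).map fun b2 => b1 + b2).toOuterMeasure
        {s | t ≤ s}) :=
  S_dominated_by_binomials_general q n m Y X hYlen hmod a₁ a b b₁ hrl hrr Z W rX0 hZ hW hrX0
end
end

section
/- Let X be a binary string with |X| ≥ L such that at least a (1 − ε) fraction of the bits of X equal a fixed value v ∈ {0,1}, and let X̃ be a single trace of X. Then with probability at least 1 − n^{−4}, the number of bits of X̃ not equal to v is at most 2ε|X̃|. -/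
/-! A trace keeps each bit independently with probability `p`, so for every weight `f` the
generating function `𝔼 ∏ f(tᵢ)` factorises as `∏ (1 - p + p f(xᵢ))`. Exponential Markov (Chernoff)
bounds then show that, except with probability `exp(-pε|X|/10) + exp(-p|X|/32)`, the trace has at
most `(3/2)pε|X|` bits `≠ v` and at least `(3/4)p|X|` bits, hence at most a `2ε` fraction of bits
`≠ v`. The length assumption makes each error term at most `n⁻⁵`; for `ε ≥ 1/2` there is nothing
to prove. -/

open scoped ENNReal

noncomputable section

/-- The distribution of a trace of `X` through the deletion channel with
retention probability `p`: each bit is kept independently with probability `p`,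
and the surviving bits are concatenated. -/
def tracePMF (p : ℝ) : List Bool → PMF (List Bool)
  | [] => PMF.pure []
  | b :: xs => (bern p).bind fun keep =>
      (tracePMF p xs).map fun t => if keep then b :: t else t

open Real

namespace PMF

variable {α β : Type*}

theorem tsum_bind_mul (Q : PMF α) (g : α → PMF β) (w : β → ℝ≥0∞) :
    ∑' b, Q.bind g b * w b = ∑' a, Q a * ∑' b, g a b * w b := by
  simp only [bind_apply, ← ENNReal.tsum_mul_right, ← ENNReal.tsum_mul_left, mul_assoc]
  exact ENNReal.tsum_comm

theorem tsum_map_mul (Q : PMF α) (h : α → β) (w : β → ℝ≥0∞) :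
    ∑' b, Q.map h b * w b = ∑' a, Q a * w (h a) := by
  rw [← bind_pure_comp, tsum_bind_mul]
  congr! with a
  simp [pure_apply]

theorem toOuterMeasure_le_tsum_mul_div (Q : PMF α) {S : Set α} {w : α → ℝ≥0∞} {c : ℝ≥0∞}
    (hc0 : c ≠ 0) (hc : c ≠ ∞) (hS : ∀ a ∈ S, c ≤ w a) :
    Q.toOuterMeasure S ≤ (∑' a, Q a * w a) / c := by
  rw [ENNReal.le_div_iff_mul_le (.inl hc0) (.inl hc), toOuterMeasure_apply,
    ← ENNReal.tsum_mul_right]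
  refine ENNReal.tsum_le_tsum fun a => ?_
  by_cases ha : a ∈ S
  · simpa [ha] using mul_le_mul_right (hS a ha) _
  · simp [ha]

theorem one_sub_toOuterMeasure_compl_le (Q : PMF α) (S : Set α) :
    1 - Q.toOuterMeasure Sᶜ ≤ Q.toOuterMeasure S := by
  rw [tsub_le_iff_right, ← (Q.toOuterMeasure_apply_eq_one_iff Set.univ).2 (Set.subset_univ _)]
  exact MeasureTheory.measure_univ_le_add_compl S

end PMF

theorem ENNReal.list_prod_map_ofReal_exp {ι : Type*} (l : List ι) (g : ι → ℝ) :
    (l.map fun i => ENNReal.ofReal (exp (g i))).prod = ENNReal.ofReal (exp (l.map g).sum) := by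
  induction l with
  | nil => simp
  | cons i l ih =>
    simp only [List.map_cons, List.prod_cons, List.sum_cons, ih, exp_add,
      ENNReal.ofReal_mul (exp_pos _).le]

theorem ENNReal.one_sub_ofReal_add_ofReal_mul_le_ofReal_exp {p x : ℝ} (hp0 : 0 ≤ p)
    (hp1 : p ≤ 1) (hx : 0 ≤ x) :
    1 - ENNReal.ofReal p + ENNReal.ofReal p * ENNReal.ofReal x
      ≤ ENNReal.ofReal (exp (p * (x - 1))) := by
  rw [← ENNReal.ofReal_one, ← ENNReal.ofReal_sub _ hp0, ← ENNReal.ofReal_mul hp0,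
    ← ENNReal.ofReal_add (by linarith) (by positivity)]
  exact ENNReal.ofReal_le_ofReal (by linarith [add_one_le_exp (p * (x - 1))])

theorem two_fifths_le_log_three_halves : (2 / 5 : ℝ) ≤ log (3 / 2) := by
  rw [le_log_iff_exp_le (by norm_num)]
  refine le_of_pow_le_pow_left₀ (by norm_num : (5 : ℕ) ≠ 0) (by norm_num) ?_
  have h : exp (2 / 5) ^ 5 = exp 1 ^ 2 := by
    rw [← exp_nat_mul, ← exp_nat_mul]
    norm_num
  rw [h]
  nlinarith [exp_one_lt_d9, exp_pos 1]

theorem exp_neg_one_fourth_le : exp (-(1 / 4)) ≤ 25 / 32 := by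
  have h : exp (1 / 4) ^ 4 = exp 1 := by
    rw [← exp_nat_mul]
    norm_num
  have hlow : (32 / 25 : ℝ) ≤ exp (1 / 4) := by
    refine le_of_pow_le_pow_left₀ (by norm_num : (4 : ℕ) ≠ 0) (exp_pos _).le ?_
    rw [h]
    nlinarith [exp_one_gt_d9]
  rw [exp_neg, inv_le_comm₀ (exp_pos _) (by norm_num)]
  linarith

section Trace

variable {p : ℝ}

theorem bern_apply_true (hp : p ≤ 1) : bern p true = ENNReal.ofReal p := by
  simp [bern, min_eq_left (Real.toNNReal_le_one.2 hp), ENNReal.ofReal, PMF.bernoulli_apply]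

theorem bern_apply_false (hp : p ≤ 1) : bern p false = 1 - ENNReal.ofReal p := by
  simp [bern, min_eq_left (Real.toNNReal_le_one.2 hp), ENNReal.ofReal, PMF.bernoulli_apply]

theorem tsum_tracePMF_mul_prod (hp : p ≤ 1) (f : Bool → ℝ≥0∞) (X : List Bool) :
    ∑' t, tracePMF p X t * (t.map f).prod
      = (X.map fun b => 1 - ENNReal.ofReal p + ENNReal.ofReal p * f b).prod := by
  induction X with
  | nil => simp [tracePMF, PMF.pure_apply]
  | cons b X ih =>
    simp only [tracePMF, PMF.tsum_bind_mul, tsum_bool, PMF.tsum_map_mul, Bool.false_eq_true,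
      if_true, if_false, List.map_cons, List.prod_cons, bern_apply_true hp, bern_apply_false hp]
    simp only [mul_left_comm _ (f b), ENNReal.tsum_mul_left, ih]
    ring

-- Markov's inequality for `exp (θ ∑ g tᵢ)`, bounding each factor by `1 + x ≤ exp x`.
theorem tracePMF_sum_map_gt_le (hp0 : 0 ≤ p) (hp1 : p ≤ 1) (g : Bool → ℝ) {θ : ℝ} (hθ : 0 ≤ θ)
    (β : ℝ) (X : List Bool) :
    (tracePMF p X).toOuterMeasure {t | β < (t.map g).sum}
      ≤ ENNReal.ofReal (exp (p * (X.map fun b => exp (θ * g b) - 1).sum - θ * β)) := by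
  have hweight (t : List Bool) : (t.map fun b => ENNReal.ofReal (exp (θ * g b))).prod
      = ENNReal.ofReal (exp (θ * (t.map g).sum)) := by
    rw [ENNReal.list_prod_map_ofReal_exp, List.sum_map_mul_left]
  calc (tracePMF p X).toOuterMeasure {t | β < (t.map g).sum}
      ≤ (∑' t, tracePMF p X t * (t.map fun b => ENNReal.ofReal (exp (θ * g b))).prod)
          / ENNReal.ofReal (exp (θ * β)) := by
        refine PMF.toOuterMeasure_le_tsum_mul_div _ (by simp [exp_pos]) ENNReal.ofReal_ne_top
          fun t ht => ?_
        rw [hweight]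
        exact ENNReal.ofReal_le_ofReal (exp_le_exp.2 (mul_le_mul_of_nonneg_left ht.le hθ))
    _ ≤ (X.map fun b => ENNReal.ofReal (exp (p * (exp (θ * g b) - 1)))).prod
          / ENNReal.ofReal (exp (θ * β)) := by
        rw [tsum_tracePMF_mul_prod hp1]
        gcongr ?_ / _
        exact List.prod_le_prod' fun b _ =>
          ENNReal.one_sub_ofReal_add_ofReal_mul_le_ofReal_exp hp0 hp1 (exp_pos _).le
    _ = _ := by
        rw [ENNReal.list_prod_map_ofReal_exp, List.sum_map_mul_left,
          ← ENNReal.ofReal_div_of_pos (exp_pos _), ← exp_sub]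

theorem tracePMF_count_gt_le (hp0 : 0 ≤ p) (hp1 : p ≤ 1) (b : Bool) {X : List Bool} {μ : ℝ}
    (hμ : (X.count b : ℝ) ≤ μ) :
    (tracePMF p X).toOuterMeasure {t | 3 / 2 * (p * μ) < t.count b}
      ≤ ENNReal.ofReal (exp (-(p * μ / 10))) := by
  have hsum (l : List Bool) (x : ℝ) :
      (l.map fun c => if c = b then x else 0).sum = l.count b * x := by
    simp [List.sum_map_ite, List.count_eq_length_filter, Bool.beq_eq_decide_eq]
  have hweight : (fun c => exp (log (3 / 2) * if c = b then 1 else 0) - 1)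
      = fun c => if c = b then 1 / 2 else 0 := by
    funext c
    split_ifs <;> norm_num [exp_log]
  have hchernoff := tracePMF_sum_map_gt_le hp0 hp1 (fun c => if c = b then 1 else 0)
    (θ := log (3 / 2)) (log_nonneg (by norm_num)) (3 / 2 * (p * μ)) X
  simp only [hweight, hsum, mul_one] at hchernoff
  refine hchernoff.trans (ENNReal.ofReal_le_ofReal (exp_le_exp.2 ?_))
  have hμ0 : 0 ≤ μ := le_trans (Nat.cast_nonneg _) hμ
  nlinarith [mul_le_mul_of_nonneg_left hμ hp0,
    mul_le_mul_of_nonneg_right two_fifths_le_log_three_halves (mul_nonneg hp0 hμ0)]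

theorem tracePMF_length_lt_le (hp0 : 0 ≤ p) (hp1 : p ≤ 1) (X : List Bool) :
    (tracePMF p X).toOuterMeasure {t | (t.length : ℝ) < 3 / 4 * (p * X.length)}
      ≤ ENNReal.ofReal (exp (-(p * X.length / 32))) := by
  have hsum (l : List Bool) (x : ℝ) : (l.map fun _ => x).sum = l.length * x := by
    simp [List.map_const']
  have hchernoff := tracePMF_sum_map_gt_le hp0 hp1 (fun _ => -1) (θ := 1 / 4) (by norm_num)
    (-(3 / 4 * (p * X.length))) X
  simp only [hsum, mul_neg_one, neg_lt_neg_iff] at hchernoff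
  refine hchernoff.trans (ENNReal.ofReal_le_ofReal (exp_le_exp.2 ?_))
  nlinarith [exp_neg_one_fourth_le, mul_nonneg hp0 (Nat.cast_nonneg X.length : (0 : ℝ) ≤ X.length)]

theorem tracePMF_two_mul_length_lt_count_le (hp0 : 0 ≤ p) (hp1 : p ≤ 1) {ε : ℝ} (hε : 0 ≤ ε)
    {b : Bool} {X : List Bool} (hX : (X.count b : ℝ) ≤ ε * X.length) :
    (tracePMF p X).toOuterMeasure {t | 2 * ε * t.length < t.count b}
      ≤ ENNReal.ofReal (exp (-(p * (ε * X.length) / 10)))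
        + ENNReal.ofReal (exp (-(p * X.length / 32))) := by
  have hsub : {t : List Bool | 2 * ε * t.length < t.count b}
      ⊆ {t | 3 / 2 * (p * (ε * X.length)) < t.count b}
        ∪ {t | (t.length : ℝ) < 3 / 4 * (p * X.length)} := by
    intro t ht
    by_contra h
    simp only [Set.mem_union, Set.mem_ofPred_eq, not_or, not_lt] at ht h
    nlinarith
  exact (MeasureTheory.measure_mono hsub).trans <| (MeasureTheory.measure_union_le _ _).trans <|
    add_le_add (tracePMF_count_gt_le hp0 hp1 b hX) (tracePMF_length_lt_le hp0 hp1 X)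

end Trace

theorem setOf_count_le_two_mul_length_eq_univ {ε : ℝ} (hε : 1 / 2 ≤ ε) (b : Bool) :
    {t : List Bool | (t.count b : ℝ) ≤ 2 * ε * t.length} = Set.univ :=
  Set.eq_univ_of_forall fun t => by
    have : (t.count b : ℝ) ≤ t.length := by exact_mod_cast List.count_le_length
    show (t.count b : ℝ) ≤ 2 * ε * t.length
    nlinarith [(Nat.cast_nonneg t.length : (0 : ℝ) ≤ t.length)]

theorem ofReal_exp_neg_add_ofReal_exp_neg_le {n : ℕ} (hn : 2 ≤ n) {x y : ℝ}
    (hx : 5 * log n ≤ x) (hy : 5 * log n ≤ y) :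
    ENNReal.ofReal (exp (-x)) + ENNReal.ofReal (exp (-y)) ≤ 1 / (n : ℝ≥0∞) ^ 4 := by
  have hn2 : (2 : ℝ) ≤ n := by exact_mod_cast hn
  have hexp : exp (-(5 * log n)) = 1 / (n : ℝ) ^ 5 := by
    rw [exp_neg, show 5 * log n = log ((n : ℝ) ^ 5) by rw [log_pow]; norm_num,
      exp_log (by positivity), one_div]
  have hsum : exp (-x) + exp (-y) ≤ 1 / (n : ℝ) ^ 4 :=
    calc exp (-x) + exp (-y) ≤ 2 * exp (-(5 * log n)) := by
          linarith [exp_le_exp.2 (neg_le_neg hx), exp_le_exp.2 (neg_le_neg hy)]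
      _ = 2 / (n : ℝ) ^ 5 := by rw [hexp, mul_one_div]
      _ ≤ 1 / (n : ℝ) ^ 4 := by
          rw [div_le_div_iff₀ (by positivity) (by positivity), pow_succ]
          nlinarith [pow_pos (by positivity : (0 : ℝ) < n) 4]
  rw [← ENNReal.ofReal_add (exp_pos _).le (exp_pos _).le]
  refine (ENNReal.ofReal_le_ofReal hsum).trans_eq ?_
  rw [ENNReal.ofReal_div_of_pos (by positivity), ENNReal.ofReal_one, ENNReal.ofReal_pow
    (by positivity), ENNReal.ofReal_natCast]

theorem trace_density_preserved_general
    (q ε : ℝ) (hq0 : 0 < q) (hq1 : q < 1) (hε0 : 0 < ε)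
    (n : ℕ) (hn : 2 ≤ n) (L : ℝ) (hL : L = 50 / ((1 - q) ^ 2 * ε ^ 2) * Real.log n)
    (X : List Bool) (hXlen : L ≤ (X.length : ℝ)) (v : Bool)
    (hdens : (1 - ε) * (X.length : ℝ) ≤ (X.count v : ℝ)) :
    1 - 1 / (n : ℝ≥0∞) ^ 4 ≤ (tracePMF (1 - q) X).toOuterMeasure
      {t | (t.count (!v) : ℝ) ≤ 2 * ε * (t.length : ℝ)} := by
  rcases le_or_gt (1 / 2) ε with hε | hε
  · rw [setOf_count_le_two_mul_length_eq_univ hε,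
      (PMF.toOuterMeasure_apply_eq_one_iff _ _).2 (Set.subset_univ _)]
    exact tsub_le_self
  set p := 1 - q
  set m : ℝ := ((X.length : ℕ) : ℝ)
  have hp0 : 0 < p := by linarith
  have hlog : 0 ≤ log n := log_nonneg (by exact_mod_cast (by omega : 1 ≤ n))
  have hlen : 50 * log n ≤ p * ε * (p * ε * m) := by
    rw [hL, div_mul_eq_mul_div, div_le_iff₀ (by positivity)] at hXlen
    linarith
  have hpεm : 100 * log n ≤ p * (ε * m) := by
    nlinarith [mul_le_mul_of_nonneg_right (by nlinarith : p * ε ≤ 1 / 2)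
      (by positivity : 0 ≤ p * (ε * m))]
  have hpm : 200 * log n ≤ p * m := by
    nlinarith [mul_le_mul_of_nonneg_right (by nlinarith : p * ε ^ 2 ≤ 1 / 4)
      (by positivity : 0 ≤ p * m)]
  have hcount : (X.count (!v) : ℝ) ≤ ε * m := by
    have : (X.count v : ℝ) + X.count (!v) = m := by
      rw [← Nat.cast_add, List.count_add_count_not]
    linarith
  refine (tsub_le_tsub_left ?_ 1).trans (PMF.one_sub_toOuterMeasure_compl_le _ _)
  simp only [Set.compl_ofPred, not_le]
  exact (tracePMF_two_mul_length_lt_count_le hp0.le (by linarith) hε0.le hcount).trans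
    (ofReal_exp_neg_add_ofReal_exp_neg_le hn (x := p * (ε * m) / 10) (y := p * m / 32)
      (by linarith) (by linarith))

/-- For a string of length at least `L = (50/(p²ε²)) ln n` with a `1-ε` fraction of its
bits equal to `v`, with probability at least `1 - n⁻⁴` a trace `X̃` has at most `2ε|X̃|`
bits not equal to `v`. -/
theorem trace_density_preserved
    (q ε : ℝ) (hq0 : 0 < q) (hq1 : q < 1) (hε0 : 0 < ε) (hε1 : ε < 1)
    (n : ℕ) (hn : 2 ≤ n) (L : ℝ) (hL : L = 50 / ((1 - q) ^ 2 * ε ^ 2) * Real.log n)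
    (X : List Bool) (hXlen : L ≤ (X.length : ℝ)) (v : Bool)
    (hdens : (1 - ε) * (X.length : ℝ) ≤ (X.count v : ℝ)) :
    1 - 1 / (n : ℝ≥0∞) ^ 4 ≤ (tracePMF (1 - q) X).toOuterMeasure
      {t | (t.count (!v) : ℝ) ≤ 2 * ε * (t.length : ℝ)} :=
  trace_density_preserved_general q ε hq0 hq1 hε0 n hn L hL X hXlen v hdens
end
end
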